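/- arXiv:1108.5053 — 2 statements merged into one kernel-verified Lean document; each statement's English description precedes it below -/
import Mathlib

section
/- Two invertible substitutions σ and ρ on the two-letter alphabet 𝒜 = {a,b} are conjugate (σ ~ ρ) if and only if they have the same substitution matrix: M_σ = M_ρ. -/
open scoped Matrix

/-- The two-letter alphabet `𝒜 = {a, b}`; the letter `a` is `0` and the letter `b` is `1`. -/
abbrev A2 := Fin 2

/-- A substitution on the two-letter alphabet, given by the images of the two letters.
(The nonerasing condition is stated separately as `TwoSubst.NonErasing`.) -/
abbrev Subst := A2 → List A2

namespace TwoSubst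

/-- A substitution is non-erasing if the images of the letters are nonempty words. -/
def NonErasing (σ : Subst) : Prop := ∀ i : A2, σ i ≠ []

/-- The extension of a substitution to finite words (the morphism of the free monoid). -/
def apply (σ : Subst) (w : List A2) : List A2 := w.flatMap σ

/-- The `n`-th power `σ^n` of a substitution (as a substitution). -/
def substPow (σ : Subst) (n : ℕ) : Subst := fun i => (apply σ)^[n] [i]

/-- Composition of substitutions: `(σ ∘ τ)(i) = σ(τ(i))`. -/
def comp (σ τ : Subst) : Subst := fun i => apply σ (τ i)

/-- The substitution matrix `M_σ`: entry `(i, j)` is the number of occurrences of the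
letter `i` in `σ(j)`. -/
def M (σ : Subst) : Matrix (Fin 2) (Fin 2) ℤ := fun i j => ((σ j).count i : ℤ)

/-- A substitution is primitive if some power of its substitution matrix has all
entries positive. -/
def Primitive (σ : Subst) : Prop := ∃ n : ℕ, 0 < n ∧ ∀ i j, 0 < (M σ ^ n) i j

/-- A finite word, regarded as an element of the free group `F₂`. -/
def toFG (w : List A2) : FreeGroup A2 := (w.map FreeGroup.of).prod

/-- The endomorphism of the free group `F₂` induced by a substitution. -/
def endo (σ : Subst) : Monoid.End (FreeGroup A2) := FreeGroup.lift fun i => toFG (σ i)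

/-- A substitution is invertible if its extension to the free group `F₂` is an
automorphism of `F₂`. -/
def IsInvertible (σ : Subst) : Prop := Function.Bijective (endo σ)

/-- Two substitutions are conjugate, `σ ~ ρ`, if `σ = γ_w ∘ ρ` as endomorphisms of `F₂`
for some `w ∈ F₂`, where `γ_w x = w * x * w⁻¹`. -/
def Conj (σ ρ : Subst) : Prop := ∃ w : FreeGroup A2, ∀ x, endo σ x = w * endo ρ x * w⁻¹

/-- `w` is a (finite) factor of the bi-infinite word `u : ℤ → A2`. -/
def IsFactor (w : List A2) (u : ℤ → A2) : Prop :=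
  ∃ k : ℤ, w = (List.range w.length).map fun i => u (k + i)

/-- The hull `X_σ`: the set of bi-infinite words all of whose finite factors appear as
factors of `σ^n(a)` or `σ^n(b)` for some `n ∈ ℕ`. -/
def Hull (σ : Subst) : Set (ℤ → A2) :=
  { u | ∀ w : List A2, IsFactor w u → ∃ (n : ℕ) (x : A2), w <:+: substPow σ n x }

/-- The substitution `E : a ↦ b, b ↦ a`. -/
def Esub : Subst := ![[1], [0]]

/-- The substitution `L : a ↦ a, b ↦ ab`. -/
def Lsub : Subst := ![[0], [0, 1]]

/-- The composition `L^{a₁} ∘ E ∘ L^{a₂} ∘ E ∘ ⋯ ∘ E ∘ L^{a_m}` encoded by the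
nonempty list of exponents `a₁ :: [a₂, …, a_m]`. -/
def chain : ℕ → List ℕ → Subst
  | a, [] => substPow Lsub a
  | a, b :: rest => comp (substPow Lsub a) (comp Esub (chain b rest))

/-- The letter-exchange map `a ↦ b, b ↦ a` on letters. -/
def swapA : A2 → A2 := fun i => if i = 0 then 1 else 0

/-- The substitution matrix with real entries. -/
noncomputable def Mreal (σ : Subst) : Matrix (Fin 2) (Fin 2) ℝ := (M σ).map fun z => (z : ℝ)

/-- `lam` is the inflation factor (Perron–Frobenius eigenvalue) of `σ`: it is an
eigenvalue of `M_σ` admitting a positive eigenvector. -/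
def IsInflation (σ : Subst) (lam : ℝ) : Prop :=
  ∃ v : Fin 2 → ℝ, (∀ i, 0 < v i) ∧ (Mreal σ).mulVec v = lam • v

/-- `α` is the frequency of `σ`: `α ∈ (0,1)` and `(1-α, α)` is an eigenvector of `M_σ`
for an eigenvalue with positive eigenvector (necessarily the Perron-Frobenius
eigenvalue, i.e. the inflation factor, when `σ` is primitive). -/
def IsFreq (σ : Subst) (α : ℝ) : Prop :=
  0 < α ∧ α < 1 ∧ ∃ lam : ℝ, (Mreal σ).mulVec ![1 - α, α] = lam • ![1 - α, α]

/-- The automorphism `τ_a : a ↦ a⁻¹, b ↦ b` of the free group `F₂`. -/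
def tauA : Monoid.End (FreeGroup A2) :=
  FreeGroup.lift fun i : A2 => if i = 0 then (FreeGroup.of (0 : A2))⁻¹ else FreeGroup.of 1

/-- `ρ` is the reciprocal substitution `σ̄ = τ_a ∘ σ⁻¹ ∘ τ_a⁻¹` of `σ`, where
`φ` is the inverse automorphism `σ⁻¹` (note `τ_a⁻¹ = τ_a`). -/
def IsReciprocal (σ ρ : Subst) (φ : Monoid.End (FreeGroup A2)) : Prop :=
  (∀ x, φ (endo σ x) = x) ∧ (∀ x, endo σ (φ x) = x) ∧
    NonErasing ρ ∧ ∀ x, endo ρ x = tauA (φ (tauA x))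

/-- `σ` is a selfdual substitution (relative to its reciprocal `ρ = σ̄`):
`σ ~ σ̄` or `σ ~ E ∘ σ̄ ∘ E`. -/
def SelfDual (σ ρ : Subst) : Prop :=
  Conj σ ρ ∨ Conj σ (comp Esub (comp ρ Esub))

/-! ### Strands and dual maps -/

/-- Integer vectors in the plane. -/
abbrev V2 := Fin 2 → ℤ

/-- The abelianisation map `A : 𝒜* → ℤ²`, counting occurrences of each letter. -/
def Avec (w : List A2) : V2 := fun i => (w.count i : ℤ)

/-- The space `𝒢` (and its dual `𝒢*`): formal finite real linear combinations of the
basis elements `(W, i)` (resp. `(W, i*)`), `W ∈ ℤ²`, `i ∈ 𝒜`. -/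
abbrev Gspace := (V2 × A2) →₀ ℝ

/-- The image of the basis element `(W, i)` under `E₁(σ)`. -/
noncomputable def E1Basis (σ : Subst) (p : V2 × A2) : Gspace :=
  ∑ k ∈ Finset.range (σ p.2).length,
    Finsupp.single ((M σ).mulVec p.1 + Avec ((σ p.2).take k), (σ p.2).getD k p.2) (1 : ℝ)

/-- The one-dimensional extension `E₁(σ)`, as a linear map on `𝒢`. -/
noncomputable def E1 (σ : Subst) : Gspace →ₗ[ℝ] Gspace :=
  Finsupp.lift Gspace ℝ (V2 × A2) (E1Basis σ)

/-- The image of the basis element `(W, i*)` under the dual map `E₁*(σ)`: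
`E₁*(σ)(W, i*) = Σ_{j,k : σ(j)_k = i} (M_σ⁻¹·(W + A(σ(j)_{k+1}⋯σ(j)_{|σ(j)|})), j*)`. -/
noncomputable def E1starBasis (σ : Subst) (p : V2 × A2) : Gspace :=
  ∑ j : A2, ∑ k ∈ Finset.range (σ j).length,
    if (σ j).getD k j = p.2 then
      Finsupp.single ((M σ)⁻¹.mulVec (p.1 + Avec ((σ j).drop (k + 1))), j) (1 : ℝ)
    else 0

/-- The dual map `E₁*(σ)`, as a linear map on `𝒢*`. -/
noncomputable def E1star (σ : Subst) : Gspace →ₗ[ℝ] Gspace :=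
  Finsupp.lift Gspace ℝ (V2 × A2) (E1starBasis σ)

/-- The basis vector `e_a = (1,0)`. -/
def ea : V2 := ![1, 0]

/-- The basis vector `e_b = (0,1)`. -/
def eb : V2 := ![0, 1]

/-- `γ(0), …, γ(n)` is a finite dual strand: each step is `e_a` or `-e_b`. -/
def IsDualStrand (n : ℕ) (γ : ℕ → V2) : Prop :=
  ∀ k < n, γ (k + 1) - γ k = ea ∨ γ (k + 1) - γ k = -eb

/-- The element of `𝒢*` associated with a finite dual strand `γ(0), …, γ(n)`:
the sum of `(γ(k), b*)` over the `e_a`-steps and `(γ(k+1), a*)` over the `-e_b`-steps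
(the letter `a` is `0`, the letter `b` is `1`). -/
noncomputable def strandElem (n : ℕ) (γ : ℕ → V2) : Gspace :=
  ∑ k ∈ Finset.range n,
    if γ (k + 1) - γ k = ea then Finsupp.single (γ k, (1 : A2)) (1 : ℝ)
    else Finsupp.single (γ (k + 1), (0 : A2)) (1 : ℝ)

/-! ### Endomorphisms of the free group -/

/-- The exponent-sum homomorphism of the generator `i` on `F₂`. -/
def expSum (i : A2) : FreeGroup A2 →* Multiplicative ℤ :=
  FreeGroup.lift fun j : A2 => Multiplicative.ofAdd (if j = i then (1 : ℤ) else 0)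

/-- The abelianised matrix of an endomorphism of `F₂`: entry `(i,j)` is the exponent
sum of the generator `i` in the image of the generator `j`. -/
def abelMatrix (σ : Monoid.End (FreeGroup A2)) : Matrix (Fin 2) (Fin 2) ℤ :=
  fun i j => Multiplicative.toAdd (expSum i (σ (FreeGroup.of j)))

/-- `wprod ρ w k = w · ρ(w) · ρ²(w) ⋯ ρ^{k−1}(w)`. -/
def wprod (ρ : Monoid.End (FreeGroup A2)) (w : FreeGroup A2) : ℕ → FreeGroup A2
  | 0 => 1
  | k + 1 => wprod ρ w k * (ρ ^ k) w

end TwoSubst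

/-!
Conjugate substitutions have the same matrix since exponent sums are invariant under
conjugation. Conversely, induct on `|σ(a)| + |σ(b)|`. When this is `2`, a substitution is
determined by its matrix. Otherwise an invertible `σ` is conjugate to `τ ∘ L` or `τ ∘ L'`
(`L' : a ↦ ba, b ↦ b`) with `τ` shorter: after moving the longest common prefix of `σ(a)`,
`σ(b)` to the end, one image must be a suffix of the other, for otherwise the Stallings graph of
the two images is folded but is not a bouquet of circles, so they do not generate `F₂`.
As `det M_σ = ±1`, the matrix tells `L` and `L'` apart: the second column of `M_τ M_L`
dominates the first, while for `M_τ M_L'` it is the other way round. Writing `ρ ~ τ' ∘ L`,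
cancelling `M_L` in `M_τ M_L = M_τ' M_L` lets the induction hypothesis apply to `τ` and `τ'`.
-/

lemma List.exists_append_cons_of_not_prefix {α : Type*} :
    ∀ {u v : List α}, ¬ u <+: v → ¬ v <+: u →
      ∃ p u' v' a b, u = p ++ a :: u' ∧ v = p ++ b :: v' ∧ a ≠ b
  | [], _, h, _ => absurd List.nil_prefix h
  | _ :: _, [], _, h => absurd List.nil_prefix h
  | x :: u, y :: v, h₁, h₂ => by
    by_cases hxy : x = y
    · subst hxy
      obtain ⟨p, u', v', a, b, rfl, rfl, hab⟩ := exists_append_cons_of_not_prefix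
        (fun h => h₁ (List.cons_prefix_cons.2 ⟨rfl, h⟩))
        (fun h => h₂ (List.cons_prefix_cons.2 ⟨rfl, h⟩))
      exact ⟨x :: p, u', v', a, b, rfl, rfl, hab⟩
    · exact ⟨[], u, v, x, y, rfl, rfl, hxy⟩

lemma List.exists_append_cons_of_not_suffix {α : Type*} {u v : List α} (h₁ : ¬ u <:+ v)
    (h₂ : ¬ v <:+ u) : ∃ s u' v' a b, u = u' ++ a :: s ∧ v = v' ++ b :: s ∧ a ≠ b := by
  rw [← List.reverse_prefix] at h₁ h₂
  obtain ⟨p, u', v', a, b, hu, hv, hab⟩ := exists_append_cons_of_not_prefix h₁ h₂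
  refine ⟨p.reverse, u'.reverse, v'.reverse, a, b, ?_, ?_, hab⟩
  · simpa using congrArg List.reverse hu
  · simpa using congrArg List.reverse hv

lemma FreeGroup.End.ext {α : Type*} {f g : Monoid.End (FreeGroup α)}
    (h : ∀ a, f (.of a) = g (.of a)) : f = g :=
  FreeGroup.ext_hom (M := FreeGroup α) f g h

section FoldedGraph

variable {α X : Type*}

lemma lift_prod_apply_of_path (π : α → Equiv.Perm X) (w : List α) (p : ℕ → X)
    (hp : ∀ i (hi : i < w.length), π w[i] (p (i + 1)) = p i) :
    FreeGroup.lift π (w.map FreeGroup.of).prod (p w.length) = p 0 := by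
  induction w generalizing p with
  | nil => simp
  | cons c w ih =>
    have hw := ih (fun i => p (i + 1)) fun i hi => hp (i + 1) (by simp; omega)
    simp only [List.length_cons, List.map_cons, List.prod_cons, map_mul, Equiv.Perm.mul_apply,
      FreeGroup.lift_apply_of, hw]
    exact hp 0 (by simp)

lemma exists_perm_of_folded {E : Type*} [Finite E] (label : E → α) (src tgt : E → X)
    (hsrc : ∀ e e', label e = label e' → src e = src e' → e = e')
    (htgt : ∀ e e', label e = label e' → tgt e = tgt e' → e = e') :
    ∃ π : α → Equiv.Perm X, ∀ e, π (label e) (tgt e) = src e := by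
  have (ℓ : α) : ∃ π : Equiv.Perm X, ∀ e : {e // label e = ℓ}, π (tgt e) = src e :=
    Equiv.Perm.exists_extending_pair _ _
      (fun e e' h => Subtype.ext (htgt _ _ (e.2.trans e'.2.symm) h))
      (fun e e' h => Subtype.ext (hsrc _ _ (e.2.trans e'.2.symm) h))
  choose π hπ using this
  exact ⟨π, fun e => hπ _ ⟨e, rfl⟩⟩

lemma apply_eq_self_of_surjective {f : Monoid.End (FreeGroup α)} (hf : Function.Surjective f)
    (π : α → Equiv.Perm X) (x : X) (hx : ∀ a, FreeGroup.lift π (f (.of a)) x = x) (a : α) :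
    π a x = x := by
  have hfix (y : FreeGroup α) : FreeGroup.lift π (f y) x = x := by
    induction y using FreeGroup.induction_on with
    | C1 => simp
    | of b => exact hx b
    | inv_of b ih => rw [map_inv, map_inv, Equiv.Perm.inv_eq_iff_eq, ih]
    | mul y z hy hz => rw [map_mul, map_mul, Equiv.Perm.mul_apply, hz, hy]
  obtain ⟨y, hy⟩ := hf (.of a)
  simpa [hy] using hfix y

end FoldedGraph

namespace TwoSubst

@[simp] lemma toFG_nil : toFG [] = 1 := rfl

@[simp] lemma toFG_cons (c : A2) (w : List A2) : toFG (c :: w) = FreeGroup.of c * toFG w := by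
  simp [toFG]

@[simp] lemma toFG_append (u v : List A2) : toFG (u ++ v) = toFG u * toFG v := by
  simp [toFG]

@[simp] lemma endo_of (σ : Subst) (i : A2) : endo σ (FreeGroup.of i) = toFG (σ i) :=
  FreeGroup.lift_apply_of

lemma endo_toFG (σ : Subst) (w : List A2) : endo σ (toFG w) = toFG (apply σ w) := by
  induction w with
  | nil => rfl
  | cons c w ih => simp [ih, apply]

lemma endo_comp (σ τ : Subst) : endo (comp σ τ) = endo σ * endo τ :=
  FreeGroup.End.ext fun i => by simp [comp, endo_toFG]

lemma toAdd_expSum_toFG (i : A2) (w : List A2) :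
    (expSum i (toFG w)).toAdd = w.count i := by
  induction w with
  | nil => simp
  | cons c w ih =>
    rw [toFG_cons, map_mul, toAdd_mul, ih, List.count_cons, expSum, FreeGroup.lift_apply_of]
    split_ifs <;> simp_all [add_comm]

lemma toAdd_expSum_apply (f : Monoid.End (FreeGroup A2)) (i : A2) (x : FreeGroup A2) :
    (expSum i (f x)).toAdd = ∑ k, abelMatrix f i k * (expSum k x).toAdd := by
  induction x using FreeGroup.induction_on with
  | C1 => simp
  | of j => simp [abelMatrix, expSum]
  | inv_of j ih => simp [ih]
  | mul x y hx hy => simp [hx, hy, mul_add, Finset.sum_add_distrib]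

lemma abelMatrix_mul (f g : Monoid.End (FreeGroup A2)) :
    abelMatrix (f * g) = abelMatrix f * abelMatrix g := by
  ext i j
  exact toAdd_expSum_apply f i (g (FreeGroup.of j))

lemma abelMatrix_one : abelMatrix 1 = 1 := by
  ext i j
  simp [abelMatrix, expSum, Matrix.one_apply, eq_comm]

lemma abelMatrix_endo (σ : Subst) : abelMatrix (endo σ) = M σ := by
  ext i j
  simp [abelMatrix, M, toAdd_expSum_toFG]

lemma M_comp (σ τ : Subst) : M (comp σ τ) = M σ * M τ := by
  rw [← abelMatrix_endo, endo_comp, abelMatrix_mul, abelMatrix_endo, abelMatrix_endo]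

lemma isUnit_det_M {σ : Subst} (hσ : IsInvertible σ) : IsUnit (M σ).det := by
  let e := MulEquiv.ofBijective (endo σ) hσ
  let g : Monoid.End (FreeGroup A2) := e.symm.toMonoidHom
  have hinv : endo σ * g = 1 := Monoid.End.ext (M := FreeGroup A2) fun x => e.apply_symm_apply x
  apply Matrix.isUnit_det_of_right_inverse (B := abelMatrix g)
  rw [← abelMatrix_endo, ← abelMatrix_mul, hinv, abelMatrix_one]

lemma perm_of_M_eq {σ ρ : Subst} (h : M σ = M ρ) (j : A2) : (σ j).Perm (ρ j) :=
  List.perm_iff_count.2 fun i => by simpa [M] using congrFun (congrFun h i) j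

lemma Conj.refl (σ : Subst) : Conj σ σ := ⟨1, by simp⟩

lemma Conj.symm {σ ρ : Subst} (h : Conj σ ρ) : Conj ρ σ := by
  obtain ⟨w, h⟩ := h
  exact ⟨w⁻¹, fun x => by rw [h x]; group⟩

lemma Conj.trans {σ ρ τ : Subst} (h : Conj σ ρ) (h' : Conj ρ τ) : Conj σ τ := by
  obtain ⟨w, h⟩ := h
  obtain ⟨u, h'⟩ := h'
  exact ⟨w * u, fun x => by rw [h x, h' x]; group⟩

lemma Conj.comp_right {σ ρ : Subst} (h : Conj σ ρ) (τ : Subst) :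
    Conj (comp σ τ) (comp ρ τ) := by
  obtain ⟨w, h⟩ := h
  exact ⟨w, fun x => by rw [endo_comp, endo_comp]; exact h _⟩

lemma conj_of_forall {σ ρ : Subst} (w : FreeGroup A2)
    (h : ∀ i, toFG (σ i) = w * toFG (ρ i) * w⁻¹) : Conj σ ρ := by
  refine ⟨w, fun x => ?_⟩
  induction x using FreeGroup.induction_on with
  | C1 => simp
  | of i => simpa using h i
  | inv_of i ih => rw [map_inv, map_inv, ih]; group
  | mul x y hx hy => rw [map_mul, map_mul, hx, hy]; group

lemma Conj.M_eq {σ ρ : Subst} (h : Conj σ ρ) : M σ = M ρ := by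
  obtain ⟨w, h⟩ := h
  rw [← abelMatrix_endo, ← abelMatrix_endo]
  ext i j
  simp only [abelMatrix, h, map_mul, map_inv, mul_inv_cancel_comm]

lemma conj_append_comm (p : List A2) (t : A2 → List A2) :
    Conj (fun i => p ++ t i) (fun i => t i ++ p) :=
  conj_of_forall (toFG p) fun i => by simp; group

lemma IsInvertible.of_conj {σ ρ : Subst} (h : Conj σ ρ) (hρ : IsInvertible ρ) :
    IsInvertible σ := by
  obtain ⟨w, h⟩ := h
  have he : ⇑(endo σ) = MulAut.conj w ∘ endo ρ := funext h
  rw [IsInvertible, he]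
  exact (MulAut.conj w).bijective.comp hρ

lemma IsInvertible.of_comp {σ τ : Subst} (h : IsInvertible (comp σ τ)) (hτ : IsInvertible τ) :
    IsInvertible σ := by
  rw [IsInvertible, endo_comp, Monoid.End.coe_mul] at h
  exact (Function.Bijective.of_comp_iff _ hτ).1 h

lemma IsInvertible.apply_zero_ne_one {σ : Subst} (hσ : IsInvertible σ) : σ 0 ≠ σ 1 := by
  intro h
  have := hσ.1 (a₁ := FreeGroup.of 0) (a₂ := FreeGroup.of 1) (by simp [h])
  exact absurd (FreeGroup.of_injective this) (by decide)

lemma isInvertible_of_inverse {σ : Subst} (g : FreeGroup A2 →* FreeGroup A2)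
    (h₁ : ∀ i, g (toFG (σ i)) = FreeGroup.of i)
    (h₂ : ∀ i, endo σ (g (FreeGroup.of i)) = FreeGroup.of i) : IsInvertible σ := by
  refine Function.bijective_iff_has_inverse.2 ⟨g, fun x => ?_, fun x => ?_⟩
  · induction x using FreeGroup.induction_on with
    | C1 => simp
    | of i => simpa using h₁ i
    | inv_of i ih => simpa using ih
    | mul x y hx hy => simp [hx, hy]
  · induction x using FreeGroup.induction_on with
    | C1 => simp
    | of i => exact h₂ i
    | inv_of i ih => simpa using ih
    | mul x y hx hy => simp [hx, hy]

lemma isInvertible_Lsub : IsInvertible Lsub :=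
  isInvertible_of_inverse (FreeGroup.lift ![.of 0, (.of 0)⁻¹ * .of 1])
    (by intro i; fin_cases i <;> simp [Lsub, toFG])
    (by intro i; fin_cases i <;> simp [Lsub, toFG])

def Lsub' : Subst := ![[1, 0], [1]]

lemma isInvertible_Lsub' : IsInvertible Lsub' :=
  isInvertible_of_inverse (FreeGroup.lift ![(.of 1)⁻¹ * .of 0, .of 1])
    (by intro i; fin_cases i <;> simp [Lsub', toFG])
    (by intro i; fin_cases i <;> simp [Lsub', toFG])

lemma comp_Lsub (τ : Subst) : comp τ Lsub = ![τ 0, τ 0 ++ τ 1] := by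
  ext1 i; fin_cases i <;> simp [comp, apply, Lsub]

lemma comp_Lsub' (τ : Subst) : comp τ Lsub' = ![τ 1 ++ τ 0, τ 1] := by
  ext1 i; fin_cases i <;> simp [comp, apply, Lsub']

lemma eq_pair (σ : Subst) : σ = ![σ 0, σ 1] := by
  ext1 i; fin_cases i <;> rfl

lemma nonErasing_pair {u v : List A2} (hu : u ≠ []) (hv : v ≠ []) : NonErasing ![u, v] := by
  intro i; fin_cases i <;> simpa

lemma exists_conj_comp_Lsub {σ : Subst} (hne : NonErasing σ) (h01 : σ 0 ≠ σ 1)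
    (h : σ 0 <+: σ 1 ∨ σ 0 <:+ σ 1) : ∃ τ, NonErasing τ ∧ Conj σ (comp τ Lsub) := by
  rw [eq_pair σ] at h01 ⊢
  rcases h with ⟨w, hw⟩ | ⟨w, hw⟩
  all_goals
    have hw' : w ≠ [] := by rintro rfl; simp_all
    refine ⟨![σ 0, w], nonErasing_pair (hne 0) hw', ?_⟩
    rw [comp_Lsub, ← hw]
  · exact Conj.refl _
  · convert (conj_append_comm (σ 0) ![[], w]).symm using 1 <;> ext1 i <;> fin_cases i <;> simp

lemma exists_conj_comp_Lsub' {σ : Subst} (hne : NonErasing σ) (h01 : σ 0 ≠ σ 1)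
    (h : σ 1 <+: σ 0 ∨ σ 1 <:+ σ 0) : ∃ τ, NonErasing τ ∧ Conj σ (comp τ Lsub') := by
  rw [eq_pair σ] at h01 ⊢
  rcases h with ⟨w, hw⟩ | ⟨w, hw⟩
  all_goals
    have hw' : w ≠ [] := by rintro rfl; simp_all
    refine ⟨![w, σ 1], nonErasing_pair hw' (hne 1), ?_⟩
    rw [comp_Lsub', ← hw]
  · exact Conj.refl _
  · convert (conj_append_comm (σ 1) ![w, []]).symm using 1 <;> ext1 i <;> fin_cases i <;> simp

/-- Vertices of the Stallings graph of `U = A ++ c :: S` and `V = B ++ d :: S`, where `n = |U|`,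
`a = |A|`, `b = |B|`: `U` reads the cycle `cycleVertex n 0, …, cycleVertex n n = 0`, and `V` reads
`handleVertex n a b 0, …`, a handle through the new vertices `n, …, n + b - 1` to the vertex
`a + 1` of the cycle, followed by the rest of the cycle. -/
def cycleVertex (n i : ℕ) : ℕ := if i < n then i else 0

def handleVertex (n a b j : ℕ) : ℕ :=
  if j = 0 then 0 else if j ≤ b then n + j - 1 else cycleVertex n (j + a - b)

section VertexArithmetic

variable {n a b i j : ℕ}

lemma cycleVertex_inj (hi : i < n) (hj : j < n) (h : cycleVertex n i = cycleVertex n j) :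
    i = j := by
  simpa [cycleVertex, hi, hj] using h

lemma cycleVertex_succ_inj (hi : i < n) (hj : j < n)
    (h : cycleVertex n (i + 1) = cycleVertex n (j + 1)) : i = j := by
  simp only [cycleVertex] at h
  split_ifs at h <;> omega

lemma handleVertex_inj (ha : a < n) (hi : i ≤ b) (hj : j ≤ b)
    (h : handleVertex n a b i = handleVertex n a b j) : i = j := by
  simp only [handleVertex] at h
  split_ifs at h <;> omega

lemma handleVertex_succ_inj (ha : a < n) (hi : i ≤ b) (hj : j ≤ b)
    (h : handleVertex n a b (i + 1) = handleVertex n a b (j + 1)) : i = j := by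
  simp only [handleVertex, cycleVertex, Nat.add_one_ne_zero, if_false] at h
  split_ifs at h <;> omega

lemma cycleVertex_eq_handleVertex (hi : i < n) (hj : j ≤ b)
    (h : cycleVertex n i = handleVertex n a b j) : i = 0 ∧ j = 0 := by
  simp only [cycleVertex, handleVertex] at h
  split_ifs at h <;> omega

lemma cycleVertex_succ_eq_handleVertex_succ (ha : a < n) (hi : i < n) (hj : j ≤ b)
    (h : cycleVertex n (i + 1) = handleVertex n a b (j + 1)) : i = a ∧ j = b := by
  simp only [cycleVertex, handleVertex, Nat.add_one_ne_zero, if_false] at h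
  split_ifs at h <;> omega

end VertexArithmetic

/-- The graph is folded because `c ≠ d` and `U`, `V` start with different letters. -/
lemma exists_perm_stallings {A B S U V : List A2} {c d : A2} (hU : U = A ++ c :: S)
    (hV : V = B ++ d :: S) (hcd : c ≠ d) (hhead : U[0]? ≠ V[0]?) :
    ∃ π : A2 → Equiv.Perm ℕ,
      (∀ i (hi : i < U.length),
        π U[i] (cycleVertex U.length (i + 1)) = cycleVertex U.length i) ∧
      ∀ j (hj : j < V.length), j ≤ B.length →
        π V[j] (handleVertex U.length A.length B.length (j + 1)) =
          handleVertex U.length A.length B.length j := by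
  have hn : A.length < U.length := by simp [hU]
  have hm : B.length < V.length := by simp [hV]
  let E := Fin U.length ⊕ Fin (B.length + 1)
  let label : E → A2 := Sum.elim (fun i => U[(i : ℕ)]) (fun j => V[(j : ℕ)]'(by omega))
  let src : E → ℕ := Sum.elim (fun i => cycleVertex U.length i)
    (fun j => handleVertex U.length A.length B.length j)
  let tgt : E → ℕ := Sum.elim (fun i => cycleVertex U.length (i + 1))
    (fun j => handleVertex U.length A.length B.length (j + 1))
  have hlabel (i : Fin U.length) (j : Fin (B.length + 1)) (hl : label (.inl i) = label (.inr j)) :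
      U[(i : ℕ)]? = V[(j : ℕ)]? := by
    simp only [label, Sum.elim_inl, Sum.elim_inr] at hl
    rw [List.getElem?_eq_getElem i.2, List.getElem?_eq_getElem, hl]
  have hsrc (e e' : E) (hl : label e = label e') (hs : src e = src e') : e = e' := by
    rcases e with i | j <;> rcases e' with i' | j'
    · exact congrArg _ (Fin.ext (cycleVertex_inj i.2 i'.2 hs))
    · obtain ⟨hi, hj⟩ := cycleVertex_eq_handleVertex i.2 (Nat.le_of_lt_succ j'.2) hs
      exact absurd (hlabel i j' hl) (by rwa [hi, hj])
    · obtain ⟨hi, hj⟩ := cycleVertex_eq_handleVertex i'.2 (Nat.le_of_lt_succ j.2) hs.symm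
      exact absurd (hlabel i' j hl.symm) (by rwa [hi, hj])
    · exact congrArg _ (Fin.ext (handleVertex_inj hn (Nat.le_of_lt_succ j.2)
        (Nat.le_of_lt_succ j'.2) hs))
  have htgt (e e' : E) (hl : label e = label e') (ht : tgt e = tgt e') : e = e' := by
    rcases e with i | j <;> rcases e' with i' | j'
    · exact congrArg _ (Fin.ext (cycleVertex_succ_inj i.2 i'.2 ht))
    · obtain ⟨hi, hj⟩ :=
        cycleVertex_succ_eq_handleVertex_succ hn i.2 (Nat.le_of_lt_succ j'.2) ht
      exact absurd (hlabel i j' hl) (by simp [hi, hj, hU, hV, hcd])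
    · obtain ⟨hi, hj⟩ :=
        cycleVertex_succ_eq_handleVertex_succ hn i'.2 (Nat.le_of_lt_succ j.2) ht.symm
      exact absurd (hlabel i' j hl.symm) (by simp [hi, hj, hU, hV, hcd])
    · exact congrArg _ (Fin.ext (handleVertex_succ_inj hn (Nat.le_of_lt_succ j.2)
        (Nat.le_of_lt_succ j'.2) ht))
  obtain ⟨π, hπ⟩ := exists_perm_of_folded label src tgt hsrc htgt
  exact ⟨π, fun i hi => hπ (.inl ⟨i, hi⟩), fun j _ hj => hπ (.inr ⟨j, by omega⟩)⟩

lemma not_isInvertible_of_ne {A B S U V : List A2} {c d : A2} (hU : U = A ++ c :: S)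
    (hV : V = B ++ d :: S) (hcd : c ≠ d) (hhead : U[0]? ≠ V[0]?)
    (hlen : 3 ≤ U.length + V.length) : ¬ IsInvertible ![U, V] := by
  intro hinv
  obtain ⟨π, hπU, hπV⟩ := exists_perm_stallings hU hV hcd hhead
  have hn : U.length = A.length + 1 + S.length := by simp [hU]; omega
  have hm : V.length = B.length + 1 + S.length := by simp [hV]; omega
  have hloop (i : A2) : FreeGroup.lift π (endo ![U, V] (.of i)) 0 = 0 := by
    fin_cases i
    · simpa [toFG, cycleVertex] using lift_prod_apply_of_path π U _ hπU
    · have hpath := lift_prod_apply_of_path π V (handleVertex U.length A.length B.length)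
        fun j hj => by
          by_cases hjb : j ≤ B.length
          · exact hπV j hj hjb
          obtain ⟨k, rfl⟩ : ∃ k, j = B.length + (k + 1) := ⟨j - B.length - 1, by omega⟩
          convert hπU (A.length + (k + 1)) (by omega) using 2
          · simp [hU, hV]
          all_goals simp only [handleVertex, cycleVertex]; split_ifs <;> omega
      have hend : handleVertex U.length A.length B.length V.length = 0 := by
        simp only [handleVertex, cycleVertex]
        split_ifs <;> omega
      rw [hend] at hpath
      simpa [toFG, handleVertex] using hpath
  have hfix := apply_eq_self_of_surjective hinv.2 π 0 hloop
  by_cases h2 : 2 ≤ U.length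
  · have := hπU (U.length - 1) (by omega)
    rw [show cycleVertex U.length (U.length - 1 + 1) = 0 by
        simp only [cycleVertex]; split_ifs <;> omega,
      show cycleVertex U.length (U.length - 1) = U.length - 1 by
        simp only [cycleVertex]; split_ifs <;> omega,
      hfix] at this
    omega
  · have := hπV B.length (by omega) le_rfl
    rw [show handleVertex U.length A.length B.length (B.length + 1) = 0 by
        simp only [handleVertex, cycleVertex]; split_ifs <;> omega,
      show handleVertex U.length A.length B.length B.length = B.length by
        simp only [handleVertex]; split_ifs <;> omega,
      hfix] at this
    omega

lemma exists_conj_comp {σ : Subst} (hne : NonErasing σ) (hσ : IsInvertible σ)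
    (hsize : 3 ≤ (σ 0).length + (σ 1).length) :
    ∃ τ G, (G = Lsub ∨ G = Lsub') ∧ NonErasing τ ∧ Conj σ (comp τ G) := by
  by_cases hpre : σ 0 <+: σ 1 ∨ σ 1 <+: σ 0
  · rcases hpre with h | h
    · obtain ⟨τ, hτ, hc⟩ := exists_conj_comp_Lsub hne hσ.apply_zero_ne_one (.inl h)
      exact ⟨τ, Lsub, .inl rfl, hτ, hc⟩
    · obtain ⟨τ, hτ, hc⟩ := exists_conj_comp_Lsub' hne hσ.apply_zero_ne_one (.inl h)
      exact ⟨τ, Lsub', .inr rfl, hτ, hc⟩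
  rw [not_or] at hpre
  obtain ⟨p, u, v, a, b, hu, hv, hab⟩ := List.exists_append_cons_of_not_prefix hpre.1 hpre.2
  let ρ : Subst := ![a :: u ++ p, b :: v ++ p]
  have hσρ : Conj σ ρ := by
    convert conj_append_comm p ![a :: u, b :: v] using 1 <;> ext1 i <;> fin_cases i <;>
      simp [hu, hv, ρ]
  have hρ : IsInvertible ρ := IsInvertible.of_conj hσρ.symm hσ
  have hneρ : NonErasing ρ := nonErasing_pair (by simp) (by simp)
  by_cases hsuf : ρ 0 <:+ ρ 1 ∨ ρ 1 <:+ ρ 0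
  · rcases hsuf with h | h
    · obtain ⟨τ, hτ, hc⟩ := exists_conj_comp_Lsub hneρ hρ.apply_zero_ne_one (.inr h)
      exact ⟨τ, Lsub, .inl rfl, hτ, hσρ.trans hc⟩
    · obtain ⟨τ, hτ, hc⟩ := exists_conj_comp_Lsub' hneρ hρ.apply_zero_ne_one (.inr h)
      exact ⟨τ, Lsub', .inr rfl, hτ, hσρ.trans hc⟩
  rw [not_or] at hsuf
  obtain ⟨s, A, B, c, d, hA, hB, hcd⟩ := List.exists_append_cons_of_not_suffix hsuf.1 hsuf.2
  refine absurd hρ (not_isInvertible_of_ne hA hB hcd (by simpa using hab) ?_)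
  simp only [hu, hv, List.length_append, List.length_cons] at hsize
  simp
  omega

lemma eq_of_M_eq_of_length_eq_one {σ ρ : Subst} (hM : M σ = M ρ)
    (h : ∀ j, (σ j).length = 1) : σ = ρ := by
  ext1 j
  obtain ⟨x, hx⟩ := List.length_eq_one_iff.1 (h j)
  rw [hx, List.singleton_perm.1 (hx ▸ perm_of_M_eq hM j)]

lemma length_lt_length_comp {τ G : Subst} (hne : NonErasing τ) (hG : G = Lsub ∨ G = Lsub') :
    (τ 0).length + (τ 1).length < (comp τ G 0).length + (comp τ G 1).length := by
  have h0 := List.length_pos_iff.2 (hne 0)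
  have h1 := List.length_pos_iff.2 (hne 1)
  rcases hG with rfl | rfl <;> simp [comp_Lsub, comp_Lsub'] <;> omega

lemma det_M_comp_Lsub_eq_zero {τ τ' : Subst} (h : M (comp τ Lsub) = M (comp τ' Lsub')) :
    (M (comp τ Lsub)).det = 0 := by
  refine Matrix.det_zero_of_column_eq zero_ne_one fun k => ?_
  have h0 := congrFun (congrFun h k) 0
  have h1 := congrFun (congrFun h k) 1
  simp only [comp_Lsub, comp_Lsub', M, Matrix.cons_val_zero, Matrix.cons_val_one,
    List.count_append] at h0 h1 ⊢
  omega

lemma eq_of_M_comp_eq {τ τ' G G' : Subst} (hG : G = Lsub ∨ G = Lsub')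
    (hG' : G' = Lsub ∨ G' = Lsub') (hdet : IsUnit (M (comp τ G)).det)
    (h : M (comp τ G) = M (comp τ' G')) : G = G' := by
  rcases hG with rfl | rfl <;> rcases hG' with rfl | rfl
  · rfl
  · exact absurd (det_M_comp_Lsub_eq_zero h ▸ hdet) not_isUnit_zero
  · exact absurd (det_M_comp_Lsub_eq_zero h.symm ▸ h ▸ hdet) not_isUnit_zero
  · rfl

theorem Conj.of_M_eq {σ ρ : Subst} (hneσ : NonErasing σ) (hneρ : NonErasing ρ)
    (hσ : IsInvertible σ) (hρ : IsInvertible ρ) (hM : M σ = M ρ) : Conj σ ρ := by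
  induction hn : (σ 0).length + (σ 1).length using Nat.strong_induction_on generalizing σ ρ with
  | _ n ih =>
  have hlen (j : A2) : (σ j).length = (ρ j).length := (perm_of_M_eq hM j).length_eq
  by_cases hsmall : n ≤ 2
  · have h0 := List.length_pos_iff.2 (hneσ 0)
    have h1 := List.length_pos_iff.2 (hneσ 1)
    rw [eq_of_M_eq_of_length_eq_one hM fun j => by fin_cases j <;> simp <;> omega]
    exact Conj.refl ρ
  obtain ⟨σ', G, hG, hneσ', hσG⟩ := exists_conj_comp hneσ hσ (by omega)
  obtain ⟨ρ', G', hG', hneρ', hρG⟩ :=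
    exists_conj_comp hneρ hρ (by rw [← hlen, ← hlen]; omega)
  have hMG : M (comp σ' G) = M (comp ρ' G') := hσG.M_eq.symm.trans (hM.trans hρG.M_eq)
  obtain rfl : G = G' := eq_of_M_comp_eq hG hG' (hσG.M_eq ▸ isUnit_det_M hσ) hMG
  have hinvG : IsInvertible G := by
    rcases hG with rfl | rfl
    exacts [isInvertible_Lsub, isInvertible_Lsub']
  have hM' : M σ' = M ρ' := by
    rw [M_comp, M_comp] at hMG
    exact ((Matrix.isUnit_iff_isUnit_det _).2 (isUnit_det_M hinvG)).mul_left_inj.1 hMG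
  have hlt : (σ' 0).length + (σ' 1).length < n := by
    have := length_lt_length_comp hneσ' hG
    rwa [← (perm_of_M_eq hσG.M_eq 0).length_eq, ← (perm_of_M_eq hσG.M_eq 1).length_eq, hn]
      at this
  have hσ' := (IsInvertible.of_conj hσG.symm hσ).of_comp hinvG
  have hρ' := (IsInvertible.of_conj hρG.symm hρ).of_comp hinvG
  exact hσG.trans (((ih _ hlt hneσ' hneρ' hσ' hρ' hM' rfl).comp_right G).trans hρG.symm)

end TwoSubst

open TwoSubst in
/-- Two invertible substitutions on two letters are conjugate if and
only if they have the same substitution matrix. -/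
theorem conj_iff_same_matrix (σ ρ : Subst) (hneσ : NonErasing σ) (hneρ : NonErasing ρ)
    (hσ : IsInvertible σ) (hρ : IsInvertible ρ) :
    Conj σ ρ ↔ M σ = M ρ :=
  ⟨Conj.M_eq, Conj.of_M_eq hneσ hneρ hσ hρ⟩
end

section
/- Let σ be a primitive invertible substitution on 𝒜 = {a,b} with det M_σ = 1, with frequency α, algebraic conjugate frequency α', and dual frequency α*. Then α* = (α' − 1)/(2α' − 1). -/
open scoped Matrix

open TwoSubst in
/-- For a primitive invertible substitution `σ` on two letters with
`det M_σ = 1`, inflation factor `lam` (eigenvalue of the positive frequency eigenvector),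
frequency `α`, algebraic conjugate frequency `α'` (the `(1−α',α')`-eigenvector for the
second eigenvalue `1/lam`) and dual frequency `α*` (frequency of `M_σᵀ` for `lam`):
`α* = (α' − 1)/(2α' − 1)`. -/
theorem dualFreq_eq (σ : Subst) (hne : NonErasing σ)
    (hprim : Primitive σ) (hinv : IsInvertible σ) (hdet : (M σ).det = 1)
    (lam α α' αs : ℝ)
    (hα0 : 0 < α) (hα1 : α < 1)
    (hα : (Mreal σ).mulVec ![1 - α, α] = lam • ![1 - α, α])
    (hα' : (Mreal σ).mulVec ![1 - α', α'] = lam⁻¹ • ![1 - α', α'])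
    (hαs0 : 0 < αs) (hαs1 : αs < 1)
    (hαs : (Mreal σ)ᵀ.mulVec ![1 - αs, αs] = lam • ![1 - αs, αs]) :
    αs = (α' - 1) / (2 * α' - 1) := by
  classical
  -- entries of the real substitution matrix
  set Mr := Mreal σ with hMr
  have hMent : ∀ i j, Mr i j = (((σ j).count i : ℤ) : ℝ) := fun i j => rfl
  have hMnn : ∀ i j, (0:ℝ) ≤ Mr i j := by
    intro i j; rw [hMent]; positivity
  -- unpack the eigenvector equations
  have key : ∀ (N : Matrix (Fin 2) (Fin 2) ℝ) (x y c : ℝ),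
      N.mulVec ![x, y] = c • ![x, y] →
      (N 0 0 * x + N 0 1 * y = c * x ∧ N 1 0 * x + N 1 1 * y = c * y) := by
    intro N x y c h
    constructor
    · have := congrFun h 0
      simpa [Matrix.mulVec, dotProduct, Fin.sum_univ_two] using this
    · have := congrFun h 1
      simpa [Matrix.mulVec, dotProduct, Fin.sum_univ_two] using this
  obtain ⟨e1, e2⟩ := key Mr (1 - α) α lam hα
  obtain ⟨e3, e4⟩ := key Mr (1 - α') α' lam⁻¹ hα'
  obtain ⟨e5', e6'⟩ := key Mrᵀ (1 - αs) αs lam hαs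
  have e5 : Mr 0 0 * (1 - αs) + Mr 1 0 * αs = lam * (1 - αs) := e5'
  have e6 : Mr 0 1 * (1 - αs) + Mr 1 1 * αs = lam * αs := e6'
  -- lam ≥ 0
  have hlam0 : 0 ≤ lam := by
    nlinarith [hMnn 0 0, hMnn 0 1, mul_nonneg (hMnn 0 0) (by linarith : (0:ℝ) ≤ 1 - α),
      mul_nonneg (hMnn 0 1) hα0.le]
  -- powers of the eigenvalue equation
  have hpow : ∀ n : ℕ, (Mr ^ n).mulVec ![1 - α, α] = lam ^ n • ![1 - α, α] := by
    intro n
    induction n with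
    | zero => simp
    | succ n ih =>
      rw [pow_succ, ← Matrix.mulVec_mulVec, hα, Matrix.mulVec_smul, ih, smul_smul]
      congr 1; ring
  -- entries of powers are casts of integer entries
  have hmapow : ∀ n : ℕ, Mr ^ n = (M σ ^ n).map (fun z => (z : ℝ)) := by
    intro n
    have h1 : Mr = (Int.castRingHom ℝ).mapMatrix (M σ) := rfl
    rw [h1, ← map_pow]; rfl
  -- primitivity gives lam > 1
  obtain ⟨n, hn, hpos⟩ := hprim
  have hA : (1:ℝ) ≤ (Mr ^ n) 0 0 := by
    rw [hmapow]
    have := hpos 0 0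
    simpa [Matrix.map_apply] using (by exact_mod_cast this : (1:ℝ) ≤ ((M σ ^ n) 0 0 : ℝ))
  have hB : (1:ℝ) ≤ (Mr ^ n) 0 1 := by
    rw [hmapow]
    have := hpos 0 1
    simpa [Matrix.map_apply] using (by exact_mod_cast this : (1:ℝ) ≤ ((M σ ^ n) 0 1 : ℝ))
  have hpn : (Mr ^ n) 0 0 * (1 - α) + (Mr ^ n) 0 1 * α = lam ^ n * (1 - α) := by
    have := congrFun (hpow n) 0
    simpa [Matrix.mulVec, dotProduct, Fin.sum_univ_two] using this
  have hlamn : (1:ℝ) < lam ^ n := by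
    nlinarith [mul_le_mul_of_nonneg_right hA (by linarith : (0:ℝ) ≤ 1 - α),
      mul_le_mul_of_nonneg_right hB hα0.le]
  have hlam1 : 1 < lam := by
    by_contra h
    push_neg at h
    have : lam ^ n ≤ 1 := pow_le_one₀ hlam0 h
    linarith
  have hlamne : lam ≠ lam⁻¹ := by
    have : lam⁻¹ < 1 := by
      rw [inv_lt_one_iff₀]; right; exact hlam1
    intro h; rw [← h] at this; linarith
  -- orthogonality
  have hd : lam * ((1 - αs) * (1 - α') + αs * α')
      = lam⁻¹ * ((1 - αs) * (1 - α') + αs * α') := by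
    linear_combination (1 - αs) * e3 + αs * e4 - (1 - α') * e5 - α' * e6
  have hd0 : (1 - αs) * (1 - α') + αs * α' = 0 := by
    have h : (lam - lam⁻¹) * ((1 - αs) * (1 - α') + αs * α') = 0 := by
      linear_combination hd
    rcases mul_eq_zero.mp h with h' | h'
    · exact absurd (sub_eq_zero.mp h') hlamne
    · exact h'
  have h2 : 2 * α' - 1 ≠ 0 := by
    intro h
    have hh : α' = 1 / 2 := by linarith
    rw [hh] at hd0; nlinarith
  rw [eq_div_iff h2]
  linear_combination hd0
end
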